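/- Let μ, ξ, t ∈ ℝ with ξ > 0 and t + ξ/2 < 0, and let ε ∈ (0,1). Let F₁ and F₂ denote the cumulative distribution functions of N(μ, 1) and N(μ + ξ, 1), respectively. If ξ > log(1 + ε/(1−ε)) / |t|, then F₂(t + μ + ξ/2) < (1−ε)·F₁(t + μ + ξ/2). -/

import Mathlib

/-!
Shifting the mean by `ξ` multiplies the Gaussian density by the likelihood ratio
`exp (ξ y - ξ² / 2)`, which on `y ≤ t + ξ / 2` is at most `exp (ξ t)`. The hypothesis on `ξ`
says exactly that `exp (ξ t) < 1 - ε`.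
-/

open MeasureTheory Real Set

/-- The probability density function of the standard Gaussian `N(0,1)`. -/
noncomputable def gaussPDF (x : ℝ) : ℝ := Real.exp (-x ^ 2 / 2) / Real.sqrt (2 * Real.pi)

/-- The cumulative distribution function of the standard Gaussian `N(0,1)`. -/
noncomputable def stdGaussCDF (t : ℝ) : ℝ := ∫ y in Set.Iic t, gaussPDF y

lemma gaussPDF_pos (x : ℝ) : 0 < gaussPDF x := by
  unfold gaussPDF
  positivity

lemma integrable_gaussPDF : Integrable gaussPDF := by
  have h : gaussPDF = fun x => exp (-(1 / 2) * x ^ 2) * (√(2 * π))⁻¹ := by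
    funext x
    rw [gaussPDF, div_eq_mul_inv]
    ring_nf
  exact h ▸ (integrable_exp_neg_mul_sq (by norm_num)).mul_const _

lemma stdGaussCDF_pos (a : ℝ) : 0 < stdGaussCDF a := by
  rw [stdGaussCDF, setIntegral_pos_iff_support_of_nonneg_ae
    (.of_forall fun y => (gaussPDF_pos y).le) integrable_gaussPDF.integrableOn,
    Function.support_eq_univ fun y => (gaussPDF_pos y).ne', univ_inter]
  simp [Real.volume_Iic]

lemma gaussPDF_sub (ξ y : ℝ) : gaussPDF (y - ξ) = exp (ξ * y - ξ ^ 2 / 2) * gaussPDF y := by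
  rw [gaussPDF, gaussPDF, mul_div_assoc', ← exp_add]
  ring_nf

lemma stdGaussCDF_sub_eq_setIntegral (a ξ : ℝ) :
    stdGaussCDF (a - ξ) = ∫ y in Iic a, gaussPDF (y - ξ) := by
  rw [stdGaussCDF, ← (measurePreserving_sub_right volume ξ).setIntegral_preimage_emb
    (MeasurableEquiv.subRight ξ).measurableEmbedding, Set.preimage_sub_const_Iic, sub_add_cancel]

lemma stdGaussCDF_sub_le {ξ : ℝ} (hξ : 0 ≤ ξ) (a : ℝ) :
    stdGaussCDF (a - ξ) ≤ exp (ξ * a - ξ ^ 2 / 2) * stdGaussCDF a := by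
  rw [stdGaussCDF_sub_eq_setIntegral, stdGaussCDF, ← integral_const_mul]
  refine setIntegral_mono_on (integrable_gaussPDF.comp_sub_right ξ).integrableOn
    (integrable_gaussPDF.const_mul _).integrableOn measurableSet_Iic fun y hy => ?_
  rw [gaussPDF_sub]
  gcongr
  exacts [(gaussPDF_pos y).le, hy]

lemma exp_mul_lt_of_log_inv_div_abs_lt {ξ t c : ℝ} (ht : t < 0) (hc : 0 < c)
    (h : log c⁻¹ / |t| < ξ) : exp (ξ * t) < c := by
  rw [abs_of_neg ht, div_lt_iff₀ (neg_pos.2 ht), log_inv] at h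
  rw [← lt_log_iff_exp_lt hc]
  linarith

theorem stmt14_general (μ ξ t ε : ℝ) (ht : t + ξ / 2 < 0)
    (hε : ε ∈ Set.Ioo (0 : ℝ) 1)
    (h : ξ > Real.log (1 + ε / (1 - ε)) / |t|) :
    stdGaussCDF ((t + μ + ξ / 2) - (μ + ξ)) <
      (1 - ε) * stdGaussCDF ((t + μ + ξ / 2) - μ) := by
  obtain ⟨hε0, hε1⟩ := hε
  have h1ε : 0 < 1 - ε := sub_pos.2 hε1
  have hinv : 1 + ε / (1 - ε) = (1 - ε)⁻¹ := by field_simp; ring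
  have hξ : 0 ≤ ξ := by
    refine le_trans (div_nonneg (log_nonneg ?_) (abs_nonneg t)) h.le
    rw [hinv]
    exact one_le_inv₀ h1ε |>.2 (by linarith)
  have hexp : exp (ξ * t) < 1 - ε :=
    exp_mul_lt_of_log_inv_div_abs_lt (by linarith) h1ε (hinv ▸ h)
  rw [show t + μ + ξ / 2 - (μ + ξ) = t + ξ / 2 - ξ by ring,
    show t + μ + ξ / 2 - μ = t + ξ / 2 by ring]
  calc stdGaussCDF (t + ξ / 2 - ξ)
      ≤ exp (ξ * t) * stdGaussCDF (t + ξ / 2) := by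
        convert stdGaussCDF_sub_le hξ (t + ξ / 2) using 3; ring
    _ < (1 - ε) * stdGaussCDF (t + ξ / 2) :=
        mul_lt_mul_of_pos_right hexp (stdGaussCDF_pos _)

/-- If `ξ > log(1 + ε/(1−ε))/|t|` (with `ξ > 0`, `t + ξ/2 < 0`, `ε ∈ (0,1)`),
then the CDFs `F₁` of `N(μ,1)` and `F₂` of `N(μ+ξ,1)` satisfy
`F₂(t + μ + ξ/2) < (1−ε)·F₁(t + μ + ξ/2)`. -/
theorem stmt14 (μ ξ t ε : ℝ) (hξ : 0 < ξ) (ht : t + ξ / 2 < 0)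
    (hε : ε ∈ Set.Ioo (0 : ℝ) 1)
    (h : ξ > Real.log (1 + ε / (1 - ε)) / |t|) :
    stdGaussCDF ((t + μ + ξ / 2) - (μ + ξ)) <
      (1 - ε) * stdGaussCDF ((t + μ + ξ / 2) - μ) :=
  stmt14_general μ ξ t ε ht hε h
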